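/- arXiv:2202.09800 — 3 statements merged into one kernel-verified Lean document; each statement's English description precedes it below -/
import Mathlib

section
/- Let Ω ⊆ ℂ be a nonempty open set, let X : Ω → ℝ⁴ be a C² map, and let Ψ, f₁, f₂ : Ω → ℂ be C¹ functions such that X_z = Ψ·(f₁ + f₂, −i·(f₁ − f₂), 1 − f₁f₂, 1 + f₁f₂) componentwise on Ω. Then at every point of Ω one has the identity ⟨X_{zz̄}, X_{zz̄}⟩ = 4·Ψ²·(f₁)_z̄·(f₂)_z̄ for the ℂ-bilinear Lorentz form. In particular, if Ψ(z) ≠ 0 for all z ∈ Ω and ⟨X_{zz̄}, X_{zz̄}⟩ = 0 on Ω (i.e. the surface is marginally trapped), then for each z ∈ Ω either (f₁)_z̄(z) = 0 or (f₂)_z̄(z) = 0. -/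
open Complex

/-- Directional derivative of `f` in the direction `1` (the `u`-direction). -/
noncomputable def pdu (f : ℂ → ℂ) (z : ℂ) : ℂ := fderiv ℝ f z 1

/-- Directional derivative of `f` in the direction `i` (the `v`-direction). -/
noncomputable def pdv (f : ℂ → ℂ) (z : ℂ) : ℂ := fderiv ℝ f z Complex.I

/-- Wirtinger derivative `f_z = (1/2)(∂_u f - i ∂_v f)`. -/
noncomputable def wz (f : ℂ → ℂ) (z : ℂ) : ℂ :=
  (1 / 2 : ℂ) * (pdu f z - Complex.I * pdv f z)

/-- Wirtinger derivative `f_z̄ = (1/2)(∂_u f + i ∂_v f)`. -/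
noncomputable def wzb (f : ℂ → ℂ) (z : ℂ) : ℂ :=
  (1 / 2 : ℂ) * (pdu f z + Complex.I * pdv f z)

/-- Mixed Wirtinger derivative `f_{zz̄} = (f_z)_z̄`. -/
noncomputable def wzzb (f : ℂ → ℂ) (z : ℂ) : ℂ := wzb (fun w => wz f w) z

/-- `P_z` for a real-valued function, regarded as ℂ-valued. -/
noncomputable def rz (P : ℂ → ℝ) (z : ℂ) : ℂ := wz (fun w => (P w : ℂ)) z

/-- `P_z̄` for a real-valued function, regarded as ℂ-valued. -/
noncomputable def rzb (P : ℂ → ℝ) (z : ℂ) : ℂ := wzb (fun w => (P w : ℂ)) z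

/-- `P_{zz̄}` for a real-valued function, regarded as ℂ-valued. -/
noncomputable def rzzb (P : ℂ → ℝ) (z : ℂ) : ℂ := wzzb (fun w => (P w : ℂ)) z

/-- Weierstrass data of the first kind on `Ω`. -/
structure IsWD1 (Ω : Set ℂ) (g : ℂ → ℂ) (P Q : ℂ → ℝ) : Prop where
  holo : ∀ z ∈ Ω, DifferentiableAt ℂ g z
  gne : ∀ z ∈ Ω, g z ≠ 0
  cP : ContDiffOn ℝ 2 P Ω
  cQ : ContDiffOn ℝ 2 Q Ω
  pde : ∀ z ∈ Ω, rzzb P z = ((‖g z‖ : ℂ)) ^ 2 * rzzb Q z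
  nz : ∀ z ∈ Ω, rz P z - ((‖g z‖ : ℂ)) ^ 2 * rz Q z ≠ 0

/-- Weierstrass data of the second kind on `Ω`. -/
structure IsWD2 (Ω : Set ℂ) (h : ℂ → ℂ) (M N : ℂ → ℝ) : Prop where
  holo : ∀ z ∈ Ω, DifferentiableAt ℂ h z
  hne : ∀ z ∈ Ω, h z ≠ 0
  cM : ContDiffOn ℝ 2 M Ω
  cN : ContDiffOn ℝ 2 N Ω
  pde : ∀ z ∈ Ω, rzzb M z = (((h z).re : ℂ)) * rzzb N z
  nz : ∀ z ∈ Ω, rz M z - (((h z).re : ℂ)) * rz N z ≠ 0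

/-- Componentwise Wirtinger derivative `X_z` of an ℝ⁴-valued map. -/
noncomputable def vz (X : ℂ → Fin 4 → ℝ) (z : ℂ) : Fin 4 → ℂ :=
  fun i => rz (fun w => X w i) z

/-- Componentwise mixed Wirtinger derivative `X_{zz̄}` of an ℝ⁴-valued map. -/
noncomputable def vzzb (X : ℂ → Fin 4 → ℝ) (z : ℂ) : Fin 4 → ℂ :=
  fun i => rzzb (fun w => X w i) z

/-- The ℂ-bilinear Lorentz form on ℂ⁴. -/
def lorC (x y : Fin 4 → ℂ) : ℂ := x 0 * y 0 + x 1 * y 1 + x 2 * y 2 - x 3 * y 3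

/-- The Lorentz bilinear form on ℝ⁴. -/
def lorR (x y : Fin 4 → ℝ) : ℝ := x 0 * y 0 + x 1 * y 1 + x 2 * y 2 - x 3 * y 3


/-!
Write `X_z = Ψ V(f₁, f₂)`. Differentiating in `z̄` gives
`X_{zz̄} = Ψ_z̄ V + Ψ ((f₁)_z̄ ∂₁V + (f₂)_z̄ ∂₂V)`. The vectors `V`, `∂₁V`, `∂₂V` are pairwise
Lorentz-orthogonal and null, except for `⟨∂₁V, ∂₂V⟩ = 2`, so the square of `X_{zz̄}` collapses to
`2 · 2 Ψ² (f₁)_z̄ (f₂)_z̄`.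
-/

open Complex

lemma Filter.EventuallyEq.wzb_eq {f g : ℂ → ℂ} {z : ℂ} (h : f =ᶠ[nhds z] g) :
    wzb f z = wzb g z := by
  unfold wzb pdu pdv
  rw [h.fderiv_eq]

section WirtingerRules

variable {f g : ℂ → ℂ} {z : ℂ}

lemma wzb_const (c : ℂ) : wzb (fun _ => c) z = 0 := by
  simp [wzb, pdu, pdv]

lemma wzb_add (hf : DifferentiableAt ℝ f z) (hg : DifferentiableAt ℝ g z) :
    wzb (fun w => f w + g w) z = wzb f z + wzb g z := by
  simp only [wzb, pdu, pdv, fderiv_fun_add hf hg, add_apply]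
  ring

lemma wzb_sub (hf : DifferentiableAt ℝ f z) (hg : DifferentiableAt ℝ g z) :
    wzb (fun w => f w - g w) z = wzb f z - wzb g z := by
  simp only [wzb, pdu, pdv, fderiv_fun_sub hf hg, sub_apply]
  ring

lemma wzb_mul (hf : DifferentiableAt ℝ f z) (hg : DifferentiableAt ℝ g z) :
    wzb (fun w => f w * g w) z = f z * wzb g z + g z * wzb f z := by
  simp only [wzb, pdu, pdv, fderiv_fun_mul hf hg, add_apply,
    smul_apply, smul_eq_mul]
  ring

end WirtingerRules

/-- The null vector `V(a, b)` of the representation `X_z = Ψ V(f₁, f₂)`. -/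
def liuVector (a b : ℂ) : Fin 4 → ℂ :=
  ![a + b, -I * (a - b), 1 - a * b, 1 + a * b]

lemma wzb_mul_liuVector {Ψ f₁ f₂ : ℂ → ℂ} {z : ℂ} (hΨ : DifferentiableAt ℝ Ψ z)
    (hf₁ : DifferentiableAt ℝ f₁ z) (hf₂ : DifferentiableAt ℝ f₂ z) (i : Fin 4) :
    wzb (fun w => Ψ w * liuVector (f₁ w) (f₂ w) i) z =
      wzb Ψ z * liuVector (f₁ z) (f₂ z) i +
        Ψ z * (wzb f₁ z * ![1, -I, -f₂ z, f₂ z] i + wzb f₂ z * ![1, I, -f₁ z, f₁ z] i) := by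
  fin_cases i <;>
    simp only [liuVector, Fin.zero_eta, Fin.mk_one, Fin.reduceFinMk, Matrix.cons_val] <;>
    simp (disch := fun_prop) only [wzb_mul, wzb_add, wzb_sub, wzb_const] <;>
    ring

lemma lorC_self_liuVector_combination (c Ψ α β a b : ℂ) :
    let Y : Fin 4 → ℂ := fun i =>
      c * liuVector a b i + Ψ * (α * ![1, -I, -b, b] i + β * ![1, I, -a, a] i)
    lorC Y Y = 4 * Ψ ^ 2 * α * β := by
  simp only [lorC, liuVector, Fin.isValue, Matrix.cons_val_zero, Matrix.cons_val_one,
    Matrix.cons_val]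
  ring_nf
  simp only [I_sq]
  ring

theorem stmt_9_general (Ω : Set ℂ) (hΩopen : IsOpen Ω)
    (X : ℂ → Fin 4 → ℝ)
    (Ψ f₁ f₂ : ℂ → ℂ)
    (hΨ : ContDiffOn ℝ 1 Ψ Ω) (hf₁ : ContDiffOn ℝ 1 f₁ Ω) (hf₂ : ContDiffOn ℝ 1 f₂ Ω)
    (hrep : ∀ z ∈ Ω, ∀ i, vz X z i
      = Ψ z * ![f₁ z + f₂ z, -Complex.I * (f₁ z - f₂ z),
          1 - f₁ z * f₂ z, 1 + f₁ z * f₂ z] i) :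
    (∀ z ∈ Ω, lorC (vzzb X z) (vzzb X z) = 4 * Ψ z ^ 2 * wzb f₁ z * wzb f₂ z) ∧
      ((∀ z ∈ Ω, Ψ z ≠ 0) → (∀ z ∈ Ω, lorC (vzzb X z) (vzzb X z) = 0) →
        ∀ z ∈ Ω, wzb f₁ z = 0 ∨ wzb f₂ z = 0) := by
  have identity : ∀ z ∈ Ω, lorC (vzzb X z) (vzzb X z) = 4 * Ψ z ^ 2 * wzb f₁ z * wzb f₂ z := by
    intro z hz
    have hΩz : Ω ∈ nhds z := hΩopen.mem_nhds hz
    have hdiff {f : ℂ → ℂ} (hf : ContDiffOn ℝ 1 f Ω) : DifferentiableAt ℝ f z :=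
      (hf.contDiffAt hΩz).differentiableAt one_ne_zero
    have hX_zzb : vzzb X z = fun i => wzb (fun w => Ψ w * liuVector (f₁ w) (f₂ w) i) z :=
      funext fun i => Filter.EventuallyEq.wzb_eq <|
        Filter.eventually_of_mem hΩz fun w hw => hrep w hw i
    simp only [hX_zzb, wzb_mul_liuVector (hdiff hΨ) (hdiff hf₁) (hdiff hf₂)]
    exact lorC_self_liuVector_combination _ _ _ _ _ _
  refine ⟨identity, fun hΨne hnull z hz => ?_⟩
  have hprod : 4 * Ψ z ^ 2 * (wzb f₁ z * wzb f₂ z) = 0 := by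
    rw [← mul_assoc, ← identity z hz, hnull z hz]
  simpa [hΨne z hz] using hprod

/-- The null mean curvature identity for Liu's system, and the holomorphicity
alternative for marginally trapped surfaces. -/
theorem stmt_9 (Ω : Set ℂ) (hΩne : Ω.Nonempty) (hΩopen : IsOpen Ω)
    (X : ℂ → Fin 4 → ℝ) (hX : ∀ i, ContDiffOn ℝ 2 (fun w => X w i) Ω)
    (Ψ f₁ f₂ : ℂ → ℂ)
    (hΨ : ContDiffOn ℝ 1 Ψ Ω) (hf₁ : ContDiffOn ℝ 1 f₁ Ω) (hf₂ : ContDiffOn ℝ 1 f₂ Ω)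
    (hrep : ∀ z ∈ Ω, ∀ i, vz X z i
      = Ψ z * ![f₁ z + f₂ z, -Complex.I * (f₁ z - f₂ z),
          1 - f₁ z * f₂ z, 1 + f₁ z * f₂ z] i) :
    (∀ z ∈ Ω, lorC (vzzb X z) (vzzb X z) = 4 * Ψ z ^ 2 * wzb f₁ z * wzb f₂ z) ∧
      ((∀ z ∈ Ω, Ψ z ≠ 0) → (∀ z ∈ Ω, lorC (vzzb X z) (vzzb X z) = 0) →
        ∀ z ∈ Ω, wzb f₁ z = 0 ∨ wzb f₂ z = 0) :=
  stmt_9_general Ω hΩopen X Ψ f₁ f₂ hΨ hf₁ hf₂ hrep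
end

section
/- Let Ω ⊆ ℂ be a nonempty open preconnected set, let g : Ω → ℂ be a function with g(z) ≠ 0 for all z ∈ Ω, let P, Q : Ω → ℝ be C¹ functions, and let τ ∈ ℝ. Suppose X₀, X_τ : Ω → ℝ⁴ are C¹ maps satisfying, at every point of Ω, (X₀)_z = P_z·(1/g, i/g, 1, 1) + Q_z·(g, −i·g, −1, 1) and (X_τ)_z = P_z·(1/(e^{iτ}g), i/(e^{iτ}g), 1, 1) + Q_z·(e^{iτ}g, −i·e^{iτ}g, −1, 1). Let L_τ : ℝ⁴ → ℝ⁴ be the linear map with matrix rows (cos τ, −sin τ, 0, 0), (sin τ, cos τ, 0, 0), (0, 0, 1, 0), (0, 0, 0, 1). Then there exists a constant vector c ∈ ℝ⁴ such that X_τ(z) = L_τ(X₀(z)) + c for all z ∈ Ω. -/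
open Complex

/-! `X_τ - L_τ X₀` has vanishing Wirtinger derivative on `Ω`: the complexified rotation `L_τ`
fixes the last two coordinates and, since `cos τ - i sin τ = e^{-iτ}`, carries `(1/g, i/g)` to
`(1/(e^{iτ}g), i/(e^{iτ}g))` and `(g, -ig)` to `(e^{iτ}g, -ie^{iτ}g)`. For a real-valued function
the Wirtinger derivative `(f_u - i f_v)/2` determines both real partial derivatives, so `X_τ` and
`L_τ X₀` have the same real differential on the preconnected open set `Ω`. -/

open scoped Matrix

section Wirtinger

variable {z : ℂ}

theorem rz_eq_of_hasFDerivAt {f : ℂ → ℝ} {φ : ℂ →L[ℝ] ℝ} (hf : HasFDerivAt f φ z) :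
    rz f z = (φ 1 - I * φ I) / 2 := by
  have h : HasFDerivAt (fun w => (f w : ℂ)) (ofRealCLM.comp φ) z :=
    ofRealCLM.hasFDerivAt.comp z hf
  simp only [rz, wz, pdu, pdv, h.fderiv, ContinuousLinearMap.comp_apply, ofRealCLM_apply]
  ring

theorem fderiv_eq_of_rz_eq {f g : ℂ → ℝ} (hf : DifferentiableAt ℝ f z)
    (hg : DifferentiableAt ℝ g z) (h : rz f z = rz g z) : fderiv ℝ f z = fderiv ℝ g z := by
  rw [rz_eq_of_hasFDerivAt hf.hasFDerivAt, rz_eq_of_hasFDerivAt hg.hasFDerivAt] at h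
  have h₁ : fderiv ℝ f z 1 = fderiv ℝ g z 1 := by simpa using congrArg re h
  have h₂ : fderiv ℝ f z I = fderiv ℝ g z I := by simpa using congrArg im h
  refine ContinuousLinearMap.coe_injective (basisOneI.ext fun i => ?_)
  fin_cases i <;> simp [h₁, h₂]

theorem fderiv_eq_of_vz_eq {X Y : ℂ → Fin 4 → ℝ} (hX : DifferentiableAt ℝ X z)
    (hY : DifferentiableAt ℝ Y z) (h : vz X z = vz Y z) : fderiv ℝ X z = fderiv ℝ Y z := by
  have hX' := hasFDerivAt_pi'.1 hX.hasFDerivAt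
  have hY' := hasFDerivAt_pi'.1 hY.hasFDerivAt
  ext v i
  have hi := fderiv_eq_of_rz_eq (hX' i).differentiableAt (hY' i).differentiableAt (congrFun h i)
  rw [(hX' i).fderiv, (hY' i).fderiv] at hi
  exact congrArg (· v) hi

theorem vz_mulVec (A : Matrix (Fin 4) (Fin 4) ℝ) {X : ℂ → Fin 4 → ℝ}
    (hX : DifferentiableAt ℝ X z) :
    vz (fun w => A *ᵥ X w) z = A.map ((↑) : ℝ → ℂ) *ᵥ vz X z := by
  set D := fderiv ℝ X z
  have hAX : HasFDerivAt (fun w => A *ᵥ X w) ((Matrix.toLin' A).toContinuousLinearMap.comp D) z :=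
    (Matrix.toLin' A).toContinuousLinearMap.hasFDerivAt.comp z hX.hasFDerivAt
  have hXj : ∀ j, rz (fun w => X w j) z = ((D 1 j : ℂ) - I * D I j) / 2 := fun j =>
    rz_eq_of_hasFDerivAt (hasFDerivAt_pi'.1 hX.hasFDerivAt j)
  ext i
  refine (rz_eq_of_hasFDerivAt (hasFDerivAt_pi'.1 hAX i)).trans ?_
  simp only [vz, hXj, ContinuousLinearMap.comp_apply,
    ContinuousLinearMap.proj_apply, LinearMap.coe_toContinuousLinearMap', Matrix.toLin'_apply,
    Matrix.mulVec, dotProduct, Matrix.map_apply, ofReal_sum, ofReal_mul, Finset.mul_sum,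
    ← Finset.sum_sub_distrib, Finset.sum_div]
  exact Finset.sum_congr rfl fun j _ => by ring

end Wirtinger

noncomputable def ellipticRotation (τ : ℝ) : Matrix (Fin 4) (Fin 4) ℝ :=
  !![Real.cos τ, -Real.sin τ, 0, 0;
     Real.sin τ, Real.cos τ, 0, 0;
     0, 0, 1, 0;
     0, 0, 0, 1]

theorem exp_I_mul_inv (x : ℂ) : (exp (I * x))⁻¹ = cos x - sin x * I := by
  rw [← exp_neg, ← mul_neg, mul_comm, exp_mul_I, cos_neg, sin_neg, neg_mul, sub_eq_add_neg]

theorem ellipticRotation_map_mulVec_inv (τ : ℝ) (g : ℂ) :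
    (ellipticRotation τ).map ((↑) : ℝ → ℂ) *ᵥ ![1 / g, I / g, 1, 1]
      = ![1 / (exp (I * τ) * g), I / (exp (I * τ) * g), 1, 1] := by
  ext i
  fin_cases i <;>
    simp [ellipticRotation, Matrix.mulVec, dotProduct, Fin.sum_univ_four, div_eq_mul_inv,
      exp_I_mul_inv] <;>
    grind [I_sq]

theorem ellipticRotation_map_mulVec_self (τ : ℝ) (g : ℂ) :
    (ellipticRotation τ).map ((↑) : ℝ → ℂ) *ᵥ ![g, -I * g, -1, 1]
      = ![exp (I * τ) * g, -I * (exp (I * τ) * g), -1, 1] := by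
  ext i
  fin_cases i <;>
    simp [ellipticRotation, Matrix.mulVec, dotProduct, Fin.sum_univ_four, mul_comm I, exp_mul_I] <;>
    grind [I_sq]

theorem stmt_12_general (Ω : Set ℂ) (hΩopen : IsOpen Ω)
    (hΩconn : IsPreconnected Ω)
    (g : ℂ → ℂ) (P Q : ℂ → ℝ) (τ : ℝ)
    (X₀ Xτ : ℂ → Fin 4 → ℝ)
    (hX₀ : ∀ i, ContDiffOn ℝ 1 (fun w => X₀ w i) Ω)
    (hXτ : ∀ i, ContDiffOn ℝ 1 (fun w => Xτ w i) Ω)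
    (hrep₀ : ∀ z ∈ Ω, ∀ i, vz X₀ z i
      = rz P z * ![1 / g z, Complex.I / g z, 1, 1] i
        + rz Q z * ![g z, -Complex.I * g z, -1, 1] i)
    (hrepτ : ∀ z ∈ Ω, ∀ i, vz Xτ z i
      = rz P z * ![1 / (Complex.exp (Complex.I * τ) * g z),
          Complex.I / (Complex.exp (Complex.I * τ) * g z), 1, 1] i
        + rz Q z * ![Complex.exp (Complex.I * τ) * g z,
            -Complex.I * (Complex.exp (Complex.I * τ) * g z), -1, 1] i)
    (L : Matrix (Fin 4) (Fin 4) ℝ)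
    (hL : L = !![Real.cos τ, -Real.sin τ, 0, 0;
                 Real.sin τ, Real.cos τ, 0, 0;
                 0, 0, 1, 0;
                 0, 0, 0, 1]) :
    ∃ c : Fin 4 → ℝ, ∀ z ∈ Ω, ∀ i, Xτ z i = L.mulVec (X₀ z) i + c i := by
  obtain rfl : L = ellipticRotation τ := hL
  have hdX₀ : DifferentiableOn ℝ X₀ Ω :=
    (contDiffOn_pi.2 hX₀).differentiableOn one_ne_zero
  have hdXτ : DifferentiableOn ℝ Xτ Ω :=
    (contDiffOn_pi.2 hXτ).differentiableOn one_ne_zero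
  have hdLX₀ : DifferentiableOn ℝ (fun w => ellipticRotation τ *ᵥ X₀ w) Ω :=
    (Matrix.toLin' (ellipticRotation τ)).toContinuousLinearMap.differentiable
      |>.comp_differentiableOn hdX₀
  have hvz : ∀ z ∈ Ω, vz Xτ z = vz (fun w => ellipticRotation τ *ᵥ X₀ w) z := by
    intro z hz
    have h₀ : vz X₀ z
        = rz P z • ![1 / g z, I / g z, 1, 1] + rz Q z • ![g z, -I * g z, -1, 1] :=
      funext (hrep₀ z hz)
    have hτ : vz Xτ z = rz P z • ![1 / (exp (I * τ) * g z), I / (exp (I * τ) * g z), 1, 1]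
        + rz Q z • ![exp (I * τ) * g z, -I * (exp (I * τ) * g z), -1, 1] :=
      funext (hrepτ z hz)
    rw [vz_mulVec _ (hdX₀.differentiableAt (hΩopen.mem_nhds hz)), h₀, hτ, Matrix.mulVec_add,
      Matrix.mulVec_smul, Matrix.mulVec_smul, ellipticRotation_map_mulVec_inv,
      ellipticRotation_map_mulVec_self]
  obtain ⟨c, hc⟩ := hΩopen.exists_eq_add_of_fderiv_eq hΩconn hdXτ hdLX₀ fun z hz =>
    fderiv_eq_of_vz_eq (hdXτ.differentiableAt (hΩopen.mem_nhds hz))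
      (hdLX₀.differentiableAt (hΩopen.mem_nhds hz)) (hvz z hz)
  exact ⟨c, fun z hz i => congrFun (hc hz) i⟩

/-- The elliptic deformation is induced by an elliptic rotation of 𝕃⁴. -/
theorem stmt_12 (Ω : Set ℂ) (hΩne : Ω.Nonempty) (hΩopen : IsOpen Ω)
    (hΩconn : IsPreconnected Ω)
    (g : ℂ → ℂ) (hgne : ∀ z ∈ Ω, g z ≠ 0) (P Q : ℂ → ℝ)
    (hP : ContDiffOn ℝ 1 P Ω) (hQ : ContDiffOn ℝ 1 Q Ω) (τ : ℝ)
    (X₀ Xτ : ℂ → Fin 4 → ℝ)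
    (hX₀ : ∀ i, ContDiffOn ℝ 1 (fun w => X₀ w i) Ω)
    (hXτ : ∀ i, ContDiffOn ℝ 1 (fun w => Xτ w i) Ω)
    (hrep₀ : ∀ z ∈ Ω, ∀ i, vz X₀ z i
      = rz P z * ![1 / g z, Complex.I / g z, 1, 1] i
        + rz Q z * ![g z, -Complex.I * g z, -1, 1] i)
    (hrepτ : ∀ z ∈ Ω, ∀ i, vz Xτ z i
      = rz P z * ![1 / (Complex.exp (Complex.I * τ) * g z),
          Complex.I / (Complex.exp (Complex.I * τ) * g z), 1, 1] i
        + rz Q z * ![Complex.exp (Complex.I * τ) * g z,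
            -Complex.I * (Complex.exp (Complex.I * τ) * g z), -1, 1] i)
    (L : Matrix (Fin 4) (Fin 4) ℝ)
    (hL : L = !![Real.cos τ, -Real.sin τ, 0, 0;
                 Real.sin τ, Real.cos τ, 0, 0;
                 0, 0, 1, 0;
                 0, 0, 0, 1]) :
    ∃ c : Fin 4 → ℝ, ∀ z ∈ Ω, ∀ i, Xτ z i = L.mulVec (X₀ z) i + c i :=
  stmt_12_general Ω hΩopen hΩconn g P Q τ X₀ Xτ hX₀ hXτ hrep₀ hrepτ L hL
end

section
/- Let α, β ∈ ℝ with α² + β² < 1. Define h : ℂ → ℂ by h(z) := e^{iz}, and M, N : ℝ² → ℝ by M(u, v) := α·u + β·v + sinh u · sin u and N(u, v) := e^v·cosh u. Then for all (u, v) ∈ ℝ²: (i) ∂_u∂_u M + ∂_v∂_v M = e^{−v}·cos u · (∂_u∂_u N + ∂_v∂_v N), i.e. M_{zz̄} = (Re h)·N_{zz̄}; (ii) M_z − (Re h)·N_z = (1/2)·((α + cosh u · sin u) + i·(−β + cosh u · cos u)); (iii) M_z − (Re h)·N_z ≠ 0 (indeed, (α + cosh u · sin u, −β + cosh u · cos u)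 ≠ (0, 0), since otherwise cosh²u = α² + β² < 1, a contradiction). Hence (h, M, N) is a Weierstrass data of the second kind on ℂ. -/
open Complex

/-- Second iterated directional derivative `∂_u ∂_u f`. -/
noncomputable def pduu (f : ℂ → ℂ) (z : ℂ) : ℂ := pdu (fun w => pdu f w) z

/-- Second iterated directional derivative `∂_v ∂_v f`. -/
noncomputable def pdvv (f : ℂ → ℂ) (z : ℂ) : ℂ := pdv (fun w => pdv f w) z


/-!
For a `C²` function the mixed Wirtinger derivative `f_{zz̄}` is a quarter of the Laplacian,
because the two mixed partials `∂_u∂_v f` and `∂_v∂_u f` cancel by symmetry of the second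
derivative. Here both functions separate variables, `M = A(u) + βv` with
`A(u) = αu + sinh u sin u`, and `N = cosh u · e^v`, so `ΔM = 2 cosh u cos u` and
`ΔN = 2 e^v cosh u`; since `Re h = e^{-v} cos u`, this is `ΔM = (Re h) ΔN`, hence also
`M_{zz̄} = (Re h) N_{zz̄}`. A zero of `M_z - (Re h) N_z` would give
`cosh u · (sin u, cos u) = (-α, β)`, hence `1 ≤ cosh² u = α² + β² < 1`.
-/

section Wirtinger

variable {f : ℂ → ℂ} {z : ℂ}

theorem pdu_eq_of_hasFDerivAt {L : ℂ →L[ℝ] ℂ} (hf : HasFDerivAt f L z) : pdu f z = L 1 := by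
  rw [pdu, hf.fderiv]

theorem pdv_eq_of_hasFDerivAt {L : ℂ →L[ℝ] ℂ} (hf : HasFDerivAt f L z) : pdv f z = L I := by
  rw [pdv, hf.fderiv]

theorem hasFDerivAt_fderiv_apply (hf : ContDiffAt ℝ 2 f z) (v : ℂ) :
    HasFDerivAt (fun w => fderiv ℝ f w v) ((fderiv ℝ (fderiv ℝ f) z).flip v) z := by
  have hdiff : DifferentiableAt ℝ (fderiv ℝ f) z :=
    (hf.fderiv_right (m := 1) (by norm_num)).differentiableAt one_ne_zero
  simpa using hdiff.hasFDerivAt.clm_apply (hasFDerivAt_const v z)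

theorem wzzb_eq_laplacian_div_four (hf : ContDiffAt ℝ 2 f z) :
    wzzb f z = (pduu f z + pdvv f z) / 4 := by
  set D := fderiv ℝ (fderiv ℝ f) z
  have hu : HasFDerivAt (fun w => pdu f w) (D.flip 1) z := hasFDerivAt_fderiv_apply hf 1
  have hv : HasFDerivAt (fun w => pdv f w) (D.flip I) z := hasFDerivAt_fderiv_apply hf I
  have hwz : HasFDerivAt (wz f) ((1 / 2 : ℂ) • (D.flip 1 - I • D.flip I)) z :=
    (hu.sub (hv.const_mul I)).const_mul (1 / 2 : ℂ)
  have hsymm : D I 1 = D 1 I := hf.isSymmSndFDerivAt (by simp) I 1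
  rw [wzzb, wzb, pdu_eq_of_hasFDerivAt hwz, pdv_eq_of_hasFDerivAt hwz, pduu, pdvv,
    pdu_eq_of_hasFDerivAt hu, pdv_eq_of_hasFDerivAt hv]
  simp only [smul_apply, sub_apply, ContinuousLinearMap.flip_apply, smul_eq_mul, hsymm]
  linear_combination (-(1 / 4 : ℂ) * D I I) * I_sq

theorem rzzb_eq_laplacian_div_four {P : ℂ → ℝ} (hP : ContDiffAt ℝ 2 P z) :
    rzzb P z = (pduu (fun w => (P w : ℂ)) z + pdvv (fun w => (P w : ℂ)) z) / 4 :=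
  wzzb_eq_laplacian_div_four (ofRealCLM.contDiff.contDiffAt.comp z hP)

end Wirtinger

section SeparatedVariables

variable {a b : ℝ → ℝ} {a' b' : ℝ} {z : ℂ}

theorem hasFDerivAt_ofReal_re_add_im (ha : HasDerivAt a a' z.re) (hb : HasDerivAt b b' z.im) :
    HasFDerivAt (fun w : ℂ => ((a w.re + b w.im : ℝ) : ℂ))
      (ofRealCLM.comp (a' • reCLM + b' • imCLM)) z :=
  ofRealCLM.hasFDerivAt.comp z
    ((ha.comp_hasFDerivAt z reCLM.hasFDerivAt).add (hb.comp_hasFDerivAt z imCLM.hasFDerivAt))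

theorem hasFDerivAt_ofReal_re_mul_im (ha : HasDerivAt a a' z.re) (hb : HasDerivAt b b' z.im) :
    HasFDerivAt (fun w : ℂ => ((a w.re * b w.im : ℝ) : ℂ))
      (ofRealCLM.comp (a z.re • b' • imCLM + b z.im • a' • reCLM)) z :=
  ofRealCLM.hasFDerivAt.comp z
    ((ha.comp_hasFDerivAt z reCLM.hasFDerivAt).mul (hb.comp_hasFDerivAt z imCLM.hasFDerivAt))

theorem pdu_ofReal_re_add_im (ha : HasDerivAt a a' z.re) (hb : HasDerivAt b b' z.im) :
    pdu (fun w : ℂ => ((a w.re + b w.im : ℝ) : ℂ)) z = a' := by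
  rw [pdu_eq_of_hasFDerivAt (hasFDerivAt_ofReal_re_add_im ha hb)]
  simp

theorem pdv_ofReal_re_add_im (ha : HasDerivAt a a' z.re) (hb : HasDerivAt b b' z.im) :
    pdv (fun w : ℂ => ((a w.re + b w.im : ℝ) : ℂ)) z = b' := by
  rw [pdv_eq_of_hasFDerivAt (hasFDerivAt_ofReal_re_add_im ha hb)]
  simp

theorem pdu_ofReal_re (ha : HasDerivAt a a' z.re) : pdu (fun w : ℂ => (a w.re : ℂ)) z = a' := by
  simpa using pdu_ofReal_re_add_im ha (hasDerivAt_const z.im (0 : ℝ))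

theorem pdu_ofReal_re_mul_im (ha : HasDerivAt a a' z.re) (hb : HasDerivAt b b' z.im) :
    pdu (fun w : ℂ => ((a w.re * b w.im : ℝ) : ℂ)) z = ((a' * b z.im : ℝ) : ℂ) := by
  rw [pdu_eq_of_hasFDerivAt (hasFDerivAt_ofReal_re_mul_im ha hb)]
  simp [mul_comm]

theorem pdv_ofReal_re_mul_im (ha : HasDerivAt a a' z.re) (hb : HasDerivAt b b' z.im) :
    pdv (fun w : ℂ => ((a w.re * b w.im : ℝ) : ℂ)) z = ((a z.re * b' : ℝ) : ℂ) := by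
  rw [pdv_eq_of_hasFDerivAt (hasFDerivAt_ofReal_re_mul_im ha hb)]
  simp

end SeparatedVariables

theorem pair_add_mul_sin_neg_add_mul_cos_ne_zero {α β c : ℝ} (hαβ : α ^ 2 + β ^ 2 < 1)
    (hc : 1 ≤ c) (θ : ℝ) : (α + c * Real.sin θ, -β + c * Real.cos θ) ≠ (0, 0) := by
  intro h
  obtain ⟨hsin, hcos⟩ := Prod.mk.inj h
  have hc_sq : c ^ 2 = α ^ 2 + β ^ 2 :=
    calc c ^ 2 = c ^ 2 * (Real.sin θ ^ 2 + Real.cos θ ^ 2) := by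
          rw [Real.sin_sq_add_cos_sq, mul_one]
      _ = (c * Real.sin θ) ^ 2 + (c * Real.cos θ) ^ 2 := by ring
      _ = α ^ 2 + β ^ 2 := by
          rw [show c * Real.sin θ = -α by linarith, show c * Real.cos θ = β by linarith]
          ring
  nlinarith

theorem ofReal_add_I_mul_ofReal_ne_zero {x y : ℝ} (h : (x, y) ≠ (0, 0)) :
    (x : ℂ) + I * y ≠ 0 := by
  contrapose! h
  simpa [Complex.ext_iff] using h

section Cousin

noncomputable def cousinM (α β : ℝ) (z : ℂ) : ℝ :=
  α * z.re + β * z.im + Real.sinh z.re * Real.sin z.re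

noncomputable def cousinN (z : ℂ) : ℝ := Real.exp z.im * Real.cosh z.re

variable (α β : ℝ) (z : ℂ)

theorem ofReal_cousinM : (fun w => (cousinM α β w : ℂ))
    = fun w => (((α * w.re + Real.sinh w.re * Real.sin w.re) + β * w.im : ℝ) : ℂ) := by
  funext w
  rw [cousinM]
  push_cast
  ring

theorem ofReal_cousinN :
    (fun w => (cousinN w : ℂ)) = fun w => ((Real.cosh w.re * Real.exp w.im : ℝ) : ℂ) := by
  funext w
  rw [cousinN, mul_comm]

theorem hasDerivAt_cousinM_profile (x : ℝ) :
    HasDerivAt (fun x => α * x + Real.sinh x * Real.sin x)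
      (α + (Real.cosh x * Real.sin x + Real.sinh x * Real.cos x)) x :=
  (((hasDerivAt_id' x).const_mul α).add
    ((Real.hasDerivAt_sinh x).mul (Real.hasDerivAt_sin x))).congr_deriv (by ring)

theorem hasDerivAt_cousinM_profile_deriv (x : ℝ) :
    HasDerivAt (fun x => α + (Real.cosh x * Real.sin x + Real.sinh x * Real.cos x))
      (2 * (Real.cosh x * Real.cos x)) x :=
  ((((Real.hasDerivAt_cosh x).mul (Real.hasDerivAt_sin x)).add
    ((Real.hasDerivAt_sinh x).mul (Real.hasDerivAt_cos x))).const_add α).congr_deriv (by ring)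

theorem pdu_cousinM : pdu (fun w => (cousinM α β w : ℂ)) z
    = ((α + (Real.cosh z.re * Real.sin z.re + Real.sinh z.re * Real.cos z.re) : ℝ) : ℂ) := by
  rw [ofReal_cousinM]
  exact pdu_ofReal_re_add_im (hasDerivAt_cousinM_profile α z.re)
    (b := fun y => β * y) (by simpa using (hasDerivAt_id z.im).const_mul β)

theorem pdv_cousinM : pdv (fun w => (cousinM α β w : ℂ)) z = β := by
  rw [ofReal_cousinM]
  exact pdv_ofReal_re_add_im (hasDerivAt_cousinM_profile α z.re)
    (b := fun y => β * y) (by simpa using (hasDerivAt_id z.im).const_mul β)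

theorem pduu_cousinM : pduu (fun w => (cousinM α β w : ℂ)) z
    = ((2 * (Real.cosh z.re * Real.cos z.re) : ℝ) : ℂ) := by
  simp only [pduu, pdu_cousinM]
  exact pdu_ofReal_re (hasDerivAt_cousinM_profile_deriv α z.re)

theorem pdvv_cousinM : pdvv (fun w => (cousinM α β w : ℂ)) z = 0 := by
  simp only [pdvv, pdv_cousinM]
  simp [pdv]

theorem pdu_cousinN :
    pdu (fun w => (cousinN w : ℂ)) z = ((Real.sinh z.re * Real.exp z.im : ℝ) : ℂ) := by
  rw [ofReal_cousinN]
  exact pdu_ofReal_re_mul_im (Real.hasDerivAt_cosh z.re) (Real.hasDerivAt_exp z.im)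

theorem pdv_cousinN : pdv (fun w => (cousinN w : ℂ)) z = cousinN z := by
  rw [ofReal_cousinN, pdv_ofReal_re_mul_im (Real.hasDerivAt_cosh z.re) (Real.hasDerivAt_exp z.im),
    cousinN, mul_comm]

theorem pduu_cousinN : pduu (fun w => (cousinN w : ℂ)) z = cousinN z := by
  simp only [pduu, pdu_cousinN]
  rw [pdu_ofReal_re_mul_im (Real.hasDerivAt_sinh z.re) (Real.hasDerivAt_exp z.im), cousinN,
    mul_comm]

theorem pdvv_cousinN : pdvv (fun w => (cousinN w : ℂ)) z = cousinN z := by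
  simp only [pdvv, pdv_cousinN]

theorem re_exp_I_mul : (Complex.exp (I * z)).re = Real.exp (-z.im) * Real.cos z.re := by
  simp [exp_re, mul_re, mul_im]

theorem contDiff_cousinM : ContDiff ℝ 2 (cousinM α β) := by
  have : ContDiff ℝ 2 re := reCLM.contDiff
  have : ContDiff ℝ 2 im := imCLM.contDiff
  unfold cousinM
  fun_prop

theorem contDiff_cousinN : ContDiff ℝ 2 cousinN := by
  have : ContDiff ℝ 2 re := reCLM.contDiff
  have : ContDiff ℝ 2 im := imCLM.contDiff
  unfold cousinN
  fun_prop

theorem laplacian_cousinM_eq :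
    pduu (fun w => (cousinM α β w : ℂ)) z + pdvv (fun w => (cousinM α β w : ℂ)) z
      = ((Real.exp (-z.im) * Real.cos z.re : ℝ) : ℂ) *
          (pduu (fun w => (cousinN w : ℂ)) z + pdvv (fun w => (cousinN w : ℂ)) z) := by
  rw [pduu_cousinM, pdvv_cousinM, pduu_cousinN, pdvv_cousinN, add_zero, ← ofReal_add,
    ← ofReal_mul, cousinN, Real.exp_neg]
  congr 1
  field_simp
  ring

theorem rzzb_cousinM_eq :
    rzzb (cousinM α β) z = ((Complex.exp (I * z)).re : ℂ) * rzzb cousinN z := by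
  rw [rzzb_eq_laplacian_div_four (contDiff_cousinM α β).contDiffAt,
    rzzb_eq_laplacian_div_four contDiff_cousinN.contDiffAt, laplacian_cousinM_eq, re_exp_I_mul]
  ring

theorem rz_cousinM_sub_re_mul_rz_cousinN :
    rz (cousinM α β) z - ((Complex.exp (I * z)).re : ℂ) * rz cousinN z
      = (1 / 2 : ℂ) * (((α + Real.cosh z.re * Real.sin z.re : ℝ) : ℂ)
          + I * ((-β + Real.cosh z.re * Real.cos z.re : ℝ) : ℂ)) := by
  have hexp : (Real.exp (-z.im) : ℂ) * Real.exp z.im = 1 := by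
    rw [← ofReal_mul, ← Real.exp_add, neg_add_cancel, Real.exp_zero, ofReal_one]
  rw [rz, rz, wz, wz, pdu_cousinM, pdv_cousinM, pdu_cousinN, pdv_cousinN, re_exp_I_mul, cousinN]
  simp only [ofReal_add, ofReal_mul, ofReal_neg]
  linear_combination
    (-(1 / 2 : ℂ) * Real.cos z.re * (Real.sinh z.re - I * Real.cosh z.re)) * hexp

end Cousin

/-- A two-parameter family of Weierstrass data of the second kind deforming
the catenoid cousin. -/
theorem stmt_18 (α β : ℝ) (hαβ : α ^ 2 + β ^ 2 < 1)
    (h : ℂ → ℂ) (hh : h = fun z => Complex.exp (Complex.I * z))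
    (M : ℂ → ℝ)
    (hM : M = fun z => α * z.re + β * z.im + Real.sinh z.re * Real.sin z.re)
    (N : ℂ → ℝ) (hN : N = fun z => Real.exp z.im * Real.cosh z.re) :
    (∀ z : ℂ,
      pduu (fun w => (M w : ℂ)) z + pdvv (fun w => (M w : ℂ)) z
        = ((Real.exp (-z.im) * Real.cos z.re : ℝ) : ℂ) *
            (pduu (fun w => (N w : ℂ)) z + pdvv (fun w => (N w : ℂ)) z)) ∧
    (∀ z : ℂ, rzzb M z = (((h z).re : ℂ)) * rzzb N z) ∧
    (∀ z : ℂ, rz M z - (((h z).re : ℂ)) * rz N z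
      = (1 / 2 : ℂ) * (((α + Real.cosh z.re * Real.sin z.re : ℝ) : ℂ)
          + Complex.I * ((-β + Real.cosh z.re * Real.cos z.re : ℝ) : ℂ))) ∧
    (∀ z : ℂ, ((α + Real.cosh z.re * Real.sin z.re : ℝ),
        (-β + Real.cosh z.re * Real.cos z.re : ℝ)) ≠ (0, 0)) ∧
    (∀ z : ℂ, rz M z - (((h z).re : ℂ)) * rz N z ≠ 0) ∧
    IsWD2 Set.univ h M N := by
  subst hh
  obtain rfl : M = cousinM α β := hM
  obtain rfl : N = cousinN := hN
  have hpair (z : ℂ) :=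
    pair_add_mul_sin_neg_add_mul_cos_ne_zero hαβ (Real.one_le_cosh z.re) z.re
  have hnz (z : ℂ) :
      rz (cousinM α β) z - ((Complex.exp (I * z)).re : ℂ) * rz cousinN z ≠ 0 := by
    rw [rz_cousinM_sub_re_mul_rz_cousinN]
    exact mul_ne_zero (by norm_num) (ofReal_add_I_mul_ofReal_ne_zero (hpair z))
  refine ⟨laplacian_cousinM_eq α β, rzzb_cousinM_eq α β,
    rz_cousinM_sub_re_mul_rz_cousinN α β, hpair, hnz, ?_⟩
  exact
    { holo := fun z _ => by fun_prop
      hne := fun z _ => Complex.exp_ne_zero _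
      cM := (contDiff_cousinM α β).contDiffOn
      cN := contDiff_cousinN.contDiffOn
      pde := fun z _ => rzzb_cousinM_eq α β z
      nz := fun z _ => hnz z }
end
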